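/- With H, B, ι, π, ζ, ζ̄, γ as above, the composite ζ∘γ : H/B⁺H → B is trivial: ζ(γ(x)) = ε(x)·1_B for all x ∈ H/B⁺H. -/

import Mathlib

/-! Since ζ is left B-linear, it can be moved past the factor ι(ζ̄(h₍₁₎)) in γ(π(h)),
so ζ ∘ γ ∘ π is the convolution ζ̄ ∗ ζ, which is ε · 1 because ζ̄ is the convolution inverse of ζ. -/

open TensorProduct

noncomputable def convMap (k : Type*) {H M : Type*} [CommSemiring k]
    [AddCommMonoid H] [Module k H] [Coalgebra k H] [Semiring M] [Algebra k M]
    (f g : H →ₗ[k] M) : H →ₗ[k] M :=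
  LinearMap.mul' k M ∘ₗ TensorProduct.map f g ∘ₗ Coalgebra.comul

section LeftModuleMap

variable {k H M N : Type*} [CommSemiring k] [Semiring H] [Algebra k H]
  [AddCommMonoid M] [Module k M] [AddCommMonoid N] [Module k N]
  {B : Subalgebra k H} {ζ : H →ₗ[k] B}

theorem comp_mul'_map_val_comp (hζ : ∀ (b : B) (h : H), ζ ((b : H) * h) = b * ζ h)
    (f : M →ₗ[k] B) (g : N →ₗ[k] H) :
    ζ ∘ₗ LinearMap.mul' k H ∘ₗ TensorProduct.map (B.val.toLinearMap ∘ₗ f) g =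
      LinearMap.mul' k B ∘ₗ TensorProduct.map f (ζ ∘ₗ g) :=
  TensorProduct.ext' fun m n => by simp [hζ]

theorem comp_mul'_map_val_comul_eq_convMap [Coalgebra k H]
    (hζ : ∀ (b : B) (h : H), ζ ((b : H) * h) = b * ζ h) (f : H →ₗ[k] B) :
    ζ ∘ₗ LinearMap.mul' k H ∘ₗ TensorProduct.map (B.val.toLinearMap ∘ₗ f) LinearMap.id ∘ₗ
      Coalgebra.comul = convMap k f ζ :=
  congrArg (· ∘ₗ Coalgebra.comul) (comp_mul'_map_val_comp hζ f LinearMap.id)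

end LeftModuleMap

theorem stmt3 {k H C : Type*} [Field k] [Ring H] [HopfAlgebra k H]
    [AddCommGroup C] [Module k C] [Coalgebra k C]
    (B : Subalgebra k H)
    -- π : H → C = H/B⁺H, the quotient coalgebra map
    (π : H →ₗ[k] C) (hπsurj : Function.Surjective π)
    (hπcounit : (Coalgebra.counit : C →ₗ[k] k) ∘ₗ π = Coalgebra.counit)
    (ζ ζbar : H →ₗ[k] B)
    (hζmod : ∀ (b : B) (h : H), ζ ((b : H) * h) = b * ζ h)
    (hinv₂ : convMap k ζbar ζ =
      (Algebra.linearMap k B) ∘ₗ (Coalgebra.counit : H →ₗ[k] k))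
    -- γ : H/B⁺H → H defined by γ(π(h)) = Σ ι(ζ̄(h₍₁₎))h₍₂₎
    (γ : C →ₗ[k] H)
    (hγ : γ ∘ₗ π = LinearMap.mul' k H ∘ₗ
      TensorProduct.map (B.val.toLinearMap ∘ₗ ζbar) (LinearMap.id) ∘ₗ
      Coalgebra.comul) :
    ∀ x : C, ζ (γ x) = Coalgebra.counit (R := k) x • (1 : B) := by
  intro x
  obtain ⟨h, rfl⟩ := hπsurj x
  have hζγπ : ζ ∘ₗ γ ∘ₗ π = convMap k ζbar ζ := by
    rw [hγ, comp_mul'_map_val_comul_eq_convMap hζmod]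
  calc ζ (γ (π h)) = convMap k ζbar ζ h := LinearMap.congr_fun hζγπ h
    _ = Coalgebra.counit (R := k) h • (1 : B) := by
      simp [hinv₂, Algebra.algebraMap_eq_smul_one]
    _ = Coalgebra.counit (R := k) (π h) • (1 : B) := by
      rw [← LinearMap.congr_fun hπcounit h, LinearMap.comp_apply]
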